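/- If E is an integrable big-isotropic structure, f is Hamiltonian with (X_f,df) ∈ ΓE and h is weak-Hamiltonian with (X_h,dh) ∈ ΓE′, then {f,h} = X_f h is weak-Hamiltonian with weak-Hamiltonian vector field [X_f, X_h]; i.e., ([X_f,X_h], d(X_f h)) ∈ ΓE′. -/

import Mathlib

/-!
An algebraic model of Cartan calculus: functions form a commutative
`ℝ`-algebra `A`, vector fields are derivations of `A`, and `1`-forms are
modeled by their evaluation on vector fields.  The differential `dF`, the Lie
derivative `lieD`, the Courant bracket `courant`, the neutral metric `gPair`
and the `2`-form `omPair` of the big tangent bundle are given by their usual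
intrinsic formulas.
-/

variable (A : Type*) [CommRing A] [Algebra ℝ A]

/-- Vector fields: derivations of the algebra of functions. -/
abbrev VF := Derivation ℝ A A

/-- `1`-forms, modeled by their evaluation on vector fields. -/
abbrev Form1 := VF A → A

variable {A}

/-- Differential of a function: `(df)(X) = X f`. -/
def dF (f : A) : Form1 A := fun X => X f

/-- Lie derivative of a `1`-form: `(L_X α)(Y) = X(α(Y)) − α([X,Y])`. -/
def lieD (X : VF A) (α : Form1 A) : Form1 A := fun Y => X (α Y) - α ⁅X, Y⁆

/-- The Courant bracket
`[(X,α),(Y,β)] = ([X,Y], L_X β − L_Y α + (1/2) d(α(Y) − β(X)))`. -/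
noncomputable def courant (P Q : VF A × Form1 A) : VF A × Form1 A :=
  (⁅P.1, Q.1⁆,
    fun Z => lieD P.1 Q.2 Z - lieD Q.1 P.2 Z
      + ((1 : ℝ) / 2) • dF (P.2 Q.1 - Q.2 P.1) Z)

/-- The neutral metric `g((X,α),(Y,β)) = (1/2)(α(Y) + β(X))`. -/
noncomputable def gPair (P Q : VF A × Form1 A) : A := ((1 : ℝ) / 2) • (P.2 Q.1 + Q.2 P.1)

/-- The `2`-form `ω((X,α),(Y,β)) = (1/2)(α(Y) − β(X))`. -/
noncomputable def omPair (P Q : VF A × Form1 A) : A := ((1 : ℝ) / 2) • (P.2 Q.1 - Q.2 P.1)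

/-- The `g`-orthogonal `E′` of a set of sections `E`. -/
noncomputable def orthCompl (E : Set (VF A × Form1 A)) : Set (VF A × Form1 A) :=
  {Q | ∀ P ∈ E, gPair P Q = 0}

/-!
For an isotropic `E` closed under the Courant bracket, bracketing with an exact section
`(X_f, df)` of `E` preserves `ΓE′`: this is the Leibniz rule of the Dorfman bracket, which agrees
with the Courant bracket on `g`-orthogonal pairs. For the orthogonal pair `(X_f, df)`,
`(X_h, dh)` one has `X_h f = −X_f h`, so their Courant bracket is `([X_f, X_h], d(X_f h))`.
-/

theorem gPair_comm (P Q : VF A × Form1 A) : gPair P Q = gPair Q P := by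
  simp only [gPair, add_comm]

theorem lieD_dF (X : VF A) (h : A) : lieD X (dF h) = dF (X h) := by
  ext Z
  simp only [lieD, dF, Derivation.commutator_apply, sub_sub_cancel]

theorem courant_dF_dF (X Y : VF A) (f h : A) :
    courant (X, dF f) (Y, dF h) = (⁅X, Y⁆, dF (X h - gPair (X, dF f) (Y, dF h))) := by
  ext Z
  · rfl
  · simp only [courant, lieD_dF, gPair, dF, map_add, map_sub, Derivation.map_smul, smul_sub,
      smul_add]
    module

/-- The Leibniz rule of the Dorfman bracket `P ∘ Q = [P, Q]_C + d g(P, Q)`, written for the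
Courant bracket and an exact first argument; exactness makes `(df)([Y, Z] + [Z, Y])` vanish. -/
theorem derivation_gPair_eq (X : VF A) (f : A) (Q R : VF A × Form1 A) :
    X (gPair Q R) =
      gPair (courant (X, dF f) Q) R + gPair Q (courant (X, dF f) R)
        + ((1 : ℝ) / 2) • R.1 (gPair (X, dF f) Q)
        + ((1 : ℝ) / 2) • Q.1 (gPair (X, dF f) R) := by
  obtain ⟨Y, β⟩ := Q
  obtain ⟨Z, γ⟩ := R
  simp only [courant, lieD, gPair, dF, map_add, map_sub, Derivation.map_smul, smul_sub, smul_add,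
    Derivation.commutator_apply]
  module

theorem courant_dF_mem_orthCompl {E : Set (VF A × Form1 A)}
    (hiso : ∀ P ∈ E, ∀ Q ∈ E, gPair P Q = 0)
    (hint : ∀ P ∈ E, ∀ Q ∈ E, courant P Q ∈ E) {X : VF A} {f : A} (hP : (X, dF f) ∈ E)
    {Q : VF A × Form1 A} (hQ : Q ∈ orthCompl E) : courant (X, dF f) Q ∈ orthCompl E := by
  intro R hR
  have hQ' : ∀ R ∈ E, gPair Q R = 0 := fun R hR => (gPair_comm Q R).trans (hQ R hR)
  have hleib := derivation_gPair_eq X f Q R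
  rw [hQ' R hR, hQ' _ (hint _ hP _ hR), hQ _ hP, hiso _ hP _ hR] at hleib
  simpa only [map_zero, smul_zero, add_zero, gPair_comm R] using hleib.symm

/-- If `E` is an integrable big-isotropic structure, `f` Hamiltonian and `h`
weak-Hamiltonian, then `{f,h} = X_f h` is weak-Hamiltonian with
weak-Hamiltonian vector field `[X_f, X_h]`:
`([X_f,X_h], d(X_f h)) ∈ ΓE′`. -/
theorem poisson_bracket_weak_hamiltonian (E : Set (VF A × Form1 A))
    (hiso : ∀ P ∈ E, ∀ Q ∈ E, gPair P Q = 0)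
    (hint : ∀ P ∈ E, ∀ Q ∈ E, courant P Q ∈ E)
    (f h : A) (Xf Xh : VF A)
    (hf : (Xf, dF f) ∈ E) (hh : (Xh, dF h) ∈ orthCompl E) :
    (⁅Xf, Xh⁆, dF (Xf h)) ∈ orthCompl E := by
  have hbracket := courant_dF_dF Xf Xh f h
  rw [hh _ hf, sub_zero] at hbracket
  exact hbracket ▸ courant_dF_mem_orthCompl hiso hint hf hh
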